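/- arXiv:2510.21298 — 4 statements merged into one kernel-verified Lean document; each statement's English description precedes it below -/
import Mathlib

section
/- Gilbert-Varshamov bound for sum-rank-metric codes: A_q^{SRK}(n, m, k+1) >= |V| / V_q(n, m, k), where |V| = q^{sum_i n_i m_i} is the size of the ambient space and V_q(n,m,k) is the number of elements of sum-rank weight at most k. -/
lemma rank_neg' {R m n : Type*} [Fintype n] [CommRing R] (A : Matrix m n R) :
    (-A).rank = A.rank := by
  have h : LinearMap.range (-A).mulVecLin = LinearMap.range A.mulVecLin := by
    ext x
    constructor
    · rintro ⟨v, rfl⟩; exact ⟨-v, by simp [Matrix.mulVecLin, Matrix.neg_mulVec, Matrix.mulVec_neg]⟩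
    · rintro ⟨v, rfl⟩; exact ⟨-v, by simp [Matrix.mulVecLin, Matrix.neg_mulVec, Matrix.mulVec_neg]⟩
  unfold Matrix.rank
  rw [h]

/-- The maximum size of a code in `V` whose distinct elements are pairwise at
distance at least `d` (for a given distance function). -/
noncomputable def maxCode {V : Type*} (dist : V → V → ℕ) (d : ℕ) : ℕ :=
  sSup {N : ℕ | ∃ s : Finset V, (∀ x ∈ s, ∀ y ∈ s, x ≠ y → d ≤ dist x y) ∧ s.card = N}

/-- Gilbert–Varshamov bound for sum-rank-metric codes:
`A_q^{SRK}(n, m, k+1) ≥ q^{∑ n_i m_i} / V_q(n, m, k)`, where `V_q(n,m,k)` is the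
number of elements of sum-rank weight at most `k`. -/
theorem sumRank_gilbert_varshamov {K : Type*} [Field K] [Fintype K] {q t k : ℕ}
    (hq : Fintype.card K = q) (n m : Fin t → ℕ) (hmn : ∀ i, n i ≤ m i) :
    ((q : ℝ) ^ (∑ i, n i * m i)) /
        (Nat.card {X : (i : Fin t) → Matrix (Fin (n i)) (Fin (m i)) K //
          ∑ i, (X i).rank ≤ k}) ≤
      maxCode (fun X Y : (i : Fin t) → Matrix (Fin (n i)) (Fin (m i)) K =>
        ∑ i, (X i - Y i).rank) (k + 1) := by
  classical
  set α := ((i : Fin t) → Matrix (Fin (n i)) (Fin (m i)) K) with hαdef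
  set D : α → α → ℕ := fun X Y => ∑ i, (X i - Y i).rank with hD
  have hDsymm : ∀ X Y : α, D X Y = D Y X := by
    intro X Y
    refine Finset.sum_congr rfl fun i _ => ?_
    rw [← neg_sub (Y i) (X i), rank_neg']
  -- ambient cardinality
  have hcardα : Fintype.card α = q ^ (∑ i, n i * m i) := by
    rw [Fintype.card_pi, ← Finset.prod_pow_eq_pow_sum]
    refine Finset.prod_congr rfl fun i _ => ?_
    rw [Fintype.card_congr (Matrix.of.symm : Matrix (Fin (n i)) (Fin (m i)) K ≃ _),
      Fintype.card_fun, Fintype.card_fun, hq, Fintype.card_fin, Fintype.card_fin,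
      ← pow_mul, Nat.mul_comm]
  -- the set of code sizes
  set S : Set ℕ := {N : ℕ | ∃ s : Finset α,
      (∀ x ∈ s, ∀ y ∈ s, x ≠ y → k + 1 ≤ D x y) ∧ s.card = N} with hS
  have hS0 : (0 : ℕ) ∈ S := ⟨∅, by simp, by simp⟩
  have hSbdd : BddAbove S := by
    refine ⟨Fintype.card α, ?_⟩
    rintro N ⟨s, -, rfl⟩
    exact s.card_le_univ.trans (by simp)
  have hMC : maxCode D (k + 1) = sSup S := rfl
  have hmem : sSup S ∈ S := Nat.sSup_mem ⟨0, hS0⟩ hSbdd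
  obtain ⟨s, hscode, hscard⟩ := hmem
  -- maximality: every point is within distance k of some codeword
  have hcover : ∀ X : α, ∃ c ∈ s, D X c ≤ k := by
    intro X
    by_contra h
    push_neg at h
    have hXs : X ∉ s := by
      intro hXs
      have hh := h X hXs
      simp [hD, sub_self, Matrix.rank_zero] at hh
    have : (insert X s).card ∈ S := by
      refine ⟨insert X s, ?_, rfl⟩
      intro x hx y hy hxy
      rcases Finset.mem_insert.mp hx with hxX | hxs
      · subst hxX
        rcases Finset.mem_insert.mp hy with hyX | hys
        · exact absurd hyX.symm hxy
        · exact h y hys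
      · rcases Finset.mem_insert.mp hy with hyX | hys
        · subst hyX
          rw [hDsymm]
          exact h x hxs
        · exact hscode x hxs y hys hxy
    have hle := le_csSup hSbdd this
    rw [Finset.card_insert_of_notMem hXs, hscard] at hle
    omega
  -- counting: injection from α into s × ball
  set B := {X : α // ∑ i, (X i).rank ≤ k} with hB
  have hB0 : ∑ i, ((0 : α) i).rank ≤ k := by
    have : ∀ i : Fin t, ((0 : α) i).rank = 0 := fun i => Matrix.rank_zero
    simp [this]
  have hBne : Nonempty B := ⟨⟨0, hB0⟩⟩
  have hcount : Fintype.card α ≤ s.card * Nat.card B := by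
    choose c hc hck using hcover
    have hinj : Function.Injective (fun X : α =>
        ((⟨c X, hc X⟩ : s), (⟨fun i => X i - c X i, hck X⟩ : B))) := by
      intro X Y hXY
      simp only [Prod.mk.injEq, Subtype.mk.injEq] at hXY
      obtain ⟨h1, h2⟩ := hXY
      funext i
      have := congrFun h2 i
      have h1i := congrFun h1 i
      rw [← h1i] at this
      exact sub_left_injective this
    calc Fintype.card α ≤ Fintype.card (s × B) := Fintype.card_le_of_injective _ hinj
      _ = s.card * Nat.card B := by
          rw [Fintype.card_prod, Fintype.card_coe, Nat.card_eq_fintype_card]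
  have hBpos : 0 < Nat.card B := Nat.card_pos
  -- conclude
  rw [hMC, ← hscard]
  rw [div_le_iff₀ (by exact_mod_cast hBpos)]
  rw [hcardα] at hcount
  exact_mod_cast hcount
end

section
/- If X and Y are n x n matrices over a field with rank(X) = x, rank(Y) = y, dim(col(X) ∩ col(Y)) = c, and dim(row(X) ∩ row(Y)) = r, then rank(X - Y) >= x + y - c - r. -/
/-!
`X` maps `ker (X - Y)`, the vectors on which `X` and `Y` agree, into `col X ∩ col Y` with kernel
`ker X ∩ ker Y`, so `dim ker (X - Y) ≤ c + dim (ker X ∩ ker Y)`. The matrix obtained by stacking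
`X` on top of `Y` has kernel `ker X ∩ ker Y` and row space `row X + row Y`, so rank–nullity for it
gives `x + y + dim (ker X ∩ ker Y) = n + r`. Rank–nullity for `X - Y` combines the two.
-/

open Module LinearMap Submodule

namespace LinearMap

variable {K V W : Type*} [Field K] [AddCommGroup V] [Module K V] [AddCommGroup W] [Module K W]

theorem finrank_ker_sub_le [FiniteDimensional K V] (f g : V →ₗ[K] W) :
    finrank K (ker (f - g)) ≤ finrank K ↥(range f ⊓ range g) + finrank K ↥(ker f ⊓ ker g) := by
  set P := ker (f - g)
  have hfg : ∀ v ∈ P, f v = g v := fun v hv => sub_eq_zero.mp hv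
  have hrange : range (f.domRestrict P) ≤ range f ⊓ range g := by
    rintro _ ⟨⟨v, hv⟩, rfl⟩
    exact ⟨mem_range_self f v, hfg v hv ▸ mem_range_self g v⟩
  have hker : ker (f.domRestrict P) = comap P.subtype (ker f ⊓ ker g) := by
    ext ⟨v, hv⟩
    simp [hfg v hv]
  have hle : ker f ⊓ ker g ≤ P := fun v hv => by simp_all [P]
  calc finrank K P = finrank K (range (f.domRestrict P)) + finrank K (ker (f.domRestrict P)) :=
        (finrank_range_add_finrank_ker _).symm
    _ ≤ _ := by
      rw [hker, (comapSubtypeEquivOfLe hle).finrank_eq]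
      gcongr
      exact Submodule.finrank_mono hrange

end LinearMap

namespace Matrix

variable {K m m' n : Type*} [Field K]

theorem mulVecLin_sub {R : Type*} [CommRing R] [Fintype n] (A B : Matrix m n R) :
    (A - B).mulVecLin = A.mulVecLin - B.mulVecLin :=
  LinearMap.ext (sub_mulVec A B)

theorem rank_add_finrank_ker_mulVecLin [Fintype n] (A : Matrix m n K) :
    A.rank + finrank K (ker A.mulVecLin) = Fintype.card n := by
  rw [rank, finrank_range_add_finrank_ker, Module.finrank_fintype_fun_eq_card]

theorem rank_fromRows [Fintype m] [Fintype m'] [Fintype n]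
    (A : Matrix m n K) (B : Matrix m' n K) :
    (fromRows A B).rank = finrank K ↥(range Aᵀ.mulVecLin ⊔ range Bᵀ.mulVecLin) := by
  rw [rank_eq_finrank_span_row, range_mulVecLin, range_mulVecLin, col_transpose, col_transpose,
    ← span_union, ← Set.Sum.elim_range]
  rfl

theorem ker_fromRows_mulVecLin [Fintype n] (A : Matrix m n K) (B : Matrix m' n K) :
    ker (fromRows A B).mulVecLin = ker A.mulVecLin ⊓ ker B.mulVecLin := by
  ext v
  simp [fromRows_mulVec, funext_iff, Sum.forall]

theorem rank_add_rank_add_finrank_ker_inf [Fintype m] [Fintype m'] [Fintype n]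
    (A : Matrix m n K) (B : Matrix m' n K) :
    A.rank + B.rank + finrank K ↥(ker A.mulVecLin ⊓ ker B.mulVecLin) =
      Fintype.card n + finrank K ↥(range Aᵀ.mulVecLin ⊓ range Bᵀ.mulVecLin) := by
  rw [← rank_add_finrank_ker_mulVecLin (fromRows A B), rank_fromRows, ker_fromRows_mulVecLin,
    ← rank_transpose A, ← rank_transpose B, rank, rank, ← finrank_sup_add_finrank_inf_eq]
  ring

end Matrix

open Matrix

/-- Marsaglia's bound: if `rank X = x`, `rank Y = y`, `dim (col X ⊓ col Y) = c` and
`dim (row X ⊓ row Y) = r`, then `rank (X - Y) ≥ x + y - c - r`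
(stated as `x + y ≤ rank (X - Y) + c + r`). -/
theorem rank_sub_ge_marsaglia {K : Type*} [Field K] {n x y c r : ℕ}
    (X Y : Matrix (Fin n) (Fin n) K) (hx : X.rank = x) (hy : Y.rank = y)
    (hc : Module.finrank K
        ↥(LinearMap.range X.mulVecLin ⊓ LinearMap.range Y.mulVecLin) = c)
    (hr : Module.finrank K
        ↥(LinearMap.range Xᵀ.mulVecLin ⊓ LinearMap.range Yᵀ.mulVecLin) = r) :
    x + y ≤ (X - Y).rank + c + r := by
  have hker := finrank_ker_sub_le X.mulVecLin Y.mulVecLin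
  have hsub := rank_add_finrank_ker_mulVecLin (X - Y)
  have hrow := rank_add_rank_add_finrank_ker_inf X Y
  rw [mulVecLin_sub] at hsub
  simp only [Fintype.card_fin] at hsub hrow
  omega
end

section
/- Fix an n x n matrix X over F_q of rank i, and let c <= j <= n. The number of n x n matrices Y over F_q with rank(Y) = j and dim(col(X) ∩ col(Y)) = c equals q^{(i-c)(j-c)} (i choose c)_q (n-i choose j-c)_q times the product over l = 0 to j-1 of (q^n - q^l). -/
open Matrix

/-- The Gaussian (q-)binomial coefficient `(a choose b)_q`, as a rational number. -/
noncomputable def gaussBinom (q a b : ℕ) : ℚ :=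
  ∏ l ∈ Finset.range b, ((q : ℚ) ^ (a - l) - 1) / ((q : ℚ) ^ (b - l) - 1)

/-!
Sort the matrices `Y` by their column space `W`. A matrix with column space `W` is a surjection
`F_q^n → W`, and surjections onto `F_q^j` correspond through their rows to independent `j`-tuples
in `F_q^n`, so every `j`-dimensional `W` is the column space of `∏_{l<j} (q^n - q^l)` matrices.

It remains to count the `W` with `dim W = c + t` and `dim (U ⊓ W) = c`, where `U = col X`. Double
count the pairs `(u, w)` of `c` independent vectors of `U` and `t` vectors independent modulo `U`:
there are `∏_{l<c} (q^i - q^l) · q^{it} ∏_{l<t} (q^{n-i} - q^l)` of them, each spans such a `W`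
(with `U ⊓ W = span u`, by the modular law), and each such `W` is spanned by
`∏_{l<c} (q^c - q^l) · q^{ct} ∏_{l<t} (q^t - q^l)` of them: a `c`-tuple independent in `U ⊓ W`
and a `t`-tuple of `W` independent modulo `U ⊓ W`. The quotients are Gaussian binomials.
-/

open Function Module Submodule Finset

section GaussBinom

variable {q : ℕ}

theorem gaussBinom_eq_zero_of_lt {a b : ℕ} (hab : a < b) : gaussBinom q a b = 0 :=
  prod_eq_zero (mem_range.2 hab) (by simp)

theorem gaussBinom_mul_prod_range_pow_sub_pow (hq : 1 < q) (a b : ℕ) :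
    gaussBinom q a b * ∏ l ∈ range b, ((q : ℚ) ^ b - q ^ l) =
      ∏ l ∈ range b, ((q : ℚ) ^ a - q ^ l) := by
  rcases lt_or_ge a b with hab | hba
  · rw [gaussBinom_eq_zero_of_lt hab, zero_mul, eq_comm]
    exact prod_eq_zero (mem_range.2 hab) (sub_self _)
  rw [gaussBinom, ← prod_mul_distrib]
  refine prod_congr rfl fun l hl => ?_
  have hlb := mem_range.1 hl
  have hden : (q : ℚ) ^ (b - l) - 1 ≠ 0 :=
    sub_ne_zero.2 (one_lt_pow₀ (by exact_mod_cast hq) (by omega)).ne'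
  rw [← Nat.sub_add_cancel hlb.le, ← Nat.sub_add_cancel (hlb.le.trans hba), pow_add, pow_add,
    Nat.add_sub_cancel, Nat.add_sub_cancel]
  field_simp

theorem prod_range_pow_sub_pow_ne_zero (hq : 1 < q) (b : ℕ) :
    ∏ l ∈ range b, ((q : ℚ) ^ b - q ^ l) ≠ 0 :=
  prod_ne_zero_iff.2 fun l hl => sub_ne_zero.2 fun h =>
    (mem_range.1 hl).ne' (pow_right_injective₀ (by positivity) (by exact_mod_cast hq.ne') h)

theorem Nat.cast_prod_range_pow_sub_pow (hq : 1 ≤ q) (a b : ℕ) :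
    ((∏ l ∈ range b, (q ^ a - q ^ l) : ℕ) : ℚ) = ∏ l ∈ range b, ((q : ℚ) ^ a - q ^ l) := by
  rcases lt_or_ge a b with hab | hba
  · rw [prod_eq_zero (mem_range.2 hab) (Nat.sub_self (q ^ a)),
      prod_eq_zero (mem_range.2 hab) (sub_self ((q : ℚ) ^ a)), Nat.cast_zero]
  rw [Nat.cast_prod]
  refine prod_congr rfl fun l hl => ?_
  rw [Nat.cast_sub (Nat.pow_le_pow_right hq (by simp at hl; omega)), Nat.cast_pow, Nat.cast_pow]

end GaussBinom

theorem Nat.card_subtype_comp_of_card_fiber_eq {α β : Type*} [Finite α] [Finite β] (f : α → β)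
    (p : β → Prop) {m : ℕ} (hf : ∀ b, p b → Nat.card {a // f a = b} = m) :
    Nat.card {a // p (f a)} = m * Nat.card {b // p b} := by
  have := Fintype.ofFinite (Subtype p)
  rw [← Nat.card_congr (Equiv.sigmaSubtypeFiberEquivSubtype f fun _ => Iff.rfl), Nat.card_sigma,
    sum_congr rfl fun y _ => hf y.1 y.2, sum_const, Finset.card_univ, smul_eq_mul, mul_comm,
    Nat.card_eq_fintype_card]

section Ring

variable {R V W : Type*} [Ring R] [AddCommGroup V] [Module R V] [AddCommGroup W] [Module R W]

theorem LinearMap.natCard_fiber_eq_natCard_ker (g : V →ₗ[R] W) {b : W} (hb : b ∈ range g) :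
    Nat.card {a // g a = b} = Nat.card (ker g) := by
  obtain ⟨a₀, rfl⟩ := hb
  exact Nat.card_congr (Equiv.subtypeEquiv (Equiv.subRight a₀) fun a => by simp [sub_eq_zero])

theorem LinearMap.natCard_subtype_comp_of_surjective [Finite V] (g : V →ₗ[R] W)
    (hg : Surjective g) (ι : Type*) [Fintype ι] (p : (ι → W) → Prop) :
    Nat.card {v : ι → V // p (g ∘ v)} =
      Nat.card (ker g) ^ Fintype.card ι * Nat.card {w // p w} := by
  have := Finite.of_surjective g hg
  refine Nat.card_subtype_comp_of_card_fiber_eq (g ∘ ·) p fun w _ => ?_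
  have hfiber : {v : ι → V // g ∘ v = w} ≃ ∀ l, {a // g a = w l} :=
    (Equiv.subtypeEquivRight fun v => funext_iff).trans
      (Equiv.subtypePiEquivPi (p := fun l a => g a = w l))
  rw [Nat.card_congr hfiber, Nat.card_pi,
    prod_congr rfl fun l _ => g.natCard_fiber_eq_natCard_ker (hg (w l)), prod_const,
    Finset.card_univ]

theorem Submodule.natCard_subtype_forall_mem (S : Submodule R V) (ι : Type*)
    (p : (ι → V) → Prop) :
    Nat.card {v : {v : ι → V // p v} // ∀ l, v.1 l ∈ S} =
      Nat.card {v : ι → S // p (S.subtype ∘ v)} :=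
  Nat.card_congr
    { toFun := fun v => ⟨fun l => ⟨v.1.1 l, v.2 l⟩, v.1.2⟩
      invFun := fun v => ⟨⟨S.subtype ∘ v.1, v.2⟩, fun l => (v.1 l).2⟩
      left_inv := fun _ => rfl
      right_inv := fun _ => rfl }

end Ring

section FiniteField

variable {K V W : Type*} [Field K] [Fintype K] [AddCommGroup V] [Module K V] [AddCommGroup W]
  [Module K W]

local notation "q" => Fintype.card K

-- For `k > finrank K V` both sides vanish: the factor `l = finrank K V` of the product is `0`.
theorem natCard_linearIndependent [Finite V] (k : ℕ) :
    Nat.card {s : Fin k → V // LinearIndependent K s} =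
      ∏ l ∈ range k, (q ^ finrank K V - q ^ l) := by
  rcases le_or_gt k (finrank K V) with hk | hk
  · rw [card_linearIndependent hk, Fin.prod_univ_eq_prod_range (fun l => q ^ finrank K V - q ^ l)]
  rw [prod_eq_zero (mem_range.2 hk) (Nat.sub_self (q ^ finrank K V)), Nat.card_eq_zero]
  left
  exact ⟨fun s => hk.not_ge (by simpa using s.2.fintype_card_le_finrank)⟩

theorem LinearMap.natCard_linearIndependent_comp [Finite V] (f : V →ₗ[K] W) (t : ℕ) :
    Nat.card {v : Fin t → V // LinearIndependent K (f ∘ v)} =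
      q ^ (finrank K (LinearMap.ker f) * t) *
        ∏ l ∈ Finset.range t, (q ^ finrank K (LinearMap.range f) - q ^ l) := by
  have hli (v : Fin t → V) :
      LinearIndependent K (f ∘ v) ↔ LinearIndependent K (f.rangeRestrict ∘ v) := by
    rw [← (LinearMap.range f).subtype.linearIndependent_iff (ker_subtype _)]
    rfl
  have := Finite.of_surjective _ f.surjective_rangeRestrict
  rw [Nat.card_congr (Equiv.subtypeEquivRight hli),
    f.rangeRestrict.natCard_subtype_comp_of_surjective f.surjective_rangeRestrict _
      fun w => LinearIndependent K w,
    ker_rangeRestrict, natCard_linearIndependent, natCard_eq_pow_finrank (K := K),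
    Nat.card_eq_fintype_card, Fintype.card_fin, pow_mul]

theorem Matrix.rank_eq_card_iff_linearIndependent_row {m n : Type*} [Fintype m] [Fintype n]
    (M : Matrix m n K) : M.rank = Fintype.card m ↔ LinearIndependent K M.row := by
  rw [rank_eq_finrank_span_row, linearIndependent_iff_card_eq_finrank_span, Set.finrank, eq_comm]

theorem natCard_surjective_linearMap [Finite V] [Finite W] :
    Nat.card {f : V →ₗ[K] W // Surjective f} =
      ∏ l ∈ range (finrank K W), (q ^ finrank K V - q ^ l) := by
  let bV := finBasis K V
  let bW := finBasis K W
  have hsurj (f : V →ₗ[K] W) :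
      Surjective f ↔ LinearIndependent K (LinearMap.toMatrix bV bW f).row := by
    rw [← Matrix.rank_eq_card_iff_linearIndependent_row, rank_eq_finrank_range_toLin _ bW bV,
      toLin_toMatrix, Fintype.card_fin, ← LinearMap.range_eq_top, eq_top_iff_finrank_eq]
  have e : {f : V →ₗ[K] W // Surjective f} ≃ {M : Matrix _ _ K // LinearIndependent K M.row} :=
    (LinearMap.toMatrix bV bW).toEquiv.subtypeEquiv hsurj
  exact (Nat.card_congr e).trans
    ((natCard_linearIndependent (V := Fin (finrank K V) → K) _).trans (by rw [finrank_fin_fun]))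

theorem natCard_linearMap_range_eq [Finite V] [Finite W] (S : Submodule K W) :
    Nat.card {f : V →ₗ[K] W // LinearMap.range f = S} =
      ∏ l ∈ range (finrank K S), (q ^ finrank K V - q ^ l) := by
  rw [← natCard_surjective_linearMap]
  refine Nat.card_congr
    { toFun := fun f => ⟨f.1.codRestrict S fun x => f.2.le (LinearMap.mem_range_self f.1 x), ?_⟩
      invFun := fun g => ⟨S.subtype ∘ₗ g.1, by
        rw [LinearMap.range_comp, LinearMap.range_eq_top.2 g.2, Submodule.map_top, range_subtype]⟩
      left_inv := fun _ => rfl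
      right_inv := fun _ => rfl }
  rw [← LinearMap.range_eq_top, LinearMap.range_codRestrict, f.2, comap_subtype_self]

theorem Matrix.natCard_range_mulVecLin_eq {m n : Type*} [Fintype m] [Fintype n] [DecidableEq n]
    (S : Submodule K (m → K)) :
    Nat.card {Y : Matrix m n K // LinearMap.range Y.mulVecLin = S} =
      ∏ l ∈ range (finrank K S), (q ^ Fintype.card n - q ^ l) := by
  rw [← finrank_fintype_fun_eq_card (η := n) K, ← natCard_linearMap_range_eq]
  exact Nat.card_congr (Matrix.toLin'.toEquiv.subtypeEquiv fun Y => Iff.rfl)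

end FiniteField

section SubmoduleCount

variable {K V : Type*} [Field K] [AddCommGroup V] [Module K V] (U : Submodule K V) (c t : ℕ)

abbrev AdaptedPair : Type _ :=
  {u : Fin c → U // LinearIndependent K u} × {w : Fin t → V // LinearIndependent K (U.mkQ ∘ w)}

namespace AdaptedPair

variable {U c t} (p : AdaptedPair U c t)

def family : Fin c ⊕ Fin t → V := Sum.elim (fun l => (p.1.1 l : V)) p.2.1

def span : Submodule K V := Submodule.span K (Set.range p.family)

theorem linearIndependent_family : LinearIndependent K p.family :=
  p.1.2.sumElim_of_quotient _ p.2.2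

theorem finrank_span : finrank K p.span = c + t := by
  rw [span, finrank_span_eq_card p.linearIndependent_family, Fintype.card_sum, Fintype.card_fin,
    Fintype.card_fin]

theorem inf_span : U ⊓ p.span = Submodule.span K (Set.range fun l => (p.1.1 l : V)) := by
  have hu : Submodule.span K (Set.range fun l => (p.1.1 l : V)) ≤ U :=
    span_le.2 (Set.range_subset_iff.2 fun l => (p.1.1 l).2)
  have hw : Submodule.span K (Set.range p.2.1) ⊓ U = ⊥ := by
    simpa using (Submodule.range_ker_disjoint p.2.2).eq_bot
  rw [span, family, Set.Sum.elim_range, span_union, inf_comm, sup_inf_assoc_of_le _ hu, hw,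
    sup_bot_eq]

theorem finrank_inf_span : finrank K ↥(U ⊓ p.span) = c := by
  have hu : LinearIndependent K fun l => (p.1.1 l : V) := p.1.2.map' U.subtype U.ker_subtype
  rw [inf_span, finrank_span_eq_card hu, Fintype.card_fin]

theorem span_eq_iff {W : Submodule K V} [FiniteDimensional K W] (hW : finrank K W = c + t) :
    p.span = W ↔ (∀ l, (p.1.1 l : V) ∈ W) ∧ ∀ l, p.2.1 l ∈ W := by
  have hle : p.span ≤ W ↔ (∀ l, (p.1.1 l : V) ∈ W) ∧ ∀ l, p.2.1 l ∈ W := by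
    rw [span, span_le, Set.range_subset_iff, family, Sum.forall]
    rfl
  rw [← hle]
  exact ⟨le_of_eq, fun h => eq_of_le_of_finrank_eq h (by rw [finrank_span, hW])⟩

variable (U c t) [Fintype K]

local notation "q" => Fintype.card K

theorem natCard_eq [Finite V] :
    Nat.card (AdaptedPair U c t) = (∏ l ∈ range c, (q ^ finrank K U - q ^ l)) *
      (q ^ (finrank K U * t) * ∏ l ∈ range t, (q ^ finrank K (V ⧸ U) - q ^ l)) := by
  rw [Nat.card_prod, natCard_linearIndependent, U.mkQ.natCard_linearIndependent_comp, ker_mkQ,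
    range_mkQ, finrank_top]

theorem natCard_span_eq [Finite V] {W : Submodule K V} (hW : finrank K W = c + t)
    (hUW : finrank K ↥(U ⊓ W) = c) :
    Nat.card {p : AdaptedPair U c t // p.span = W} = (∏ l ∈ range c, (q ^ c - q ^ l)) *
      (q ^ (c * t) * ∏ l ∈ range t, (q ^ t - q ^ l)) := by
  set π := U.mkQ ∘ₗ W.subtype
  have hker : finrank K (LinearMap.ker π) = c := by
    rw [LinearMap.ker_comp, ker_mkQ, ← finrank_map_subtype_eq, map_comap_subtype, inf_comm, hUW]
  have hrange : finrank K (LinearMap.range π) = t := by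
    have := π.finrank_range_add_finrank_ker
    omega
  have e : {p : AdaptedPair U c t // p.span = W} ≃
      {u : {u : Fin c → U // LinearIndependent K u} // ∀ l, u.1 l ∈ W.comap U.subtype} ×
        {w : {w : Fin t → V // LinearIndependent K (U.mkQ ∘ w)} // ∀ l, w.1 l ∈ W} :=
    (Equiv.subtypeEquivRight fun p => p.span_eq_iff hW).trans Equiv.subtypeProdEquivProd
  have hcomap : finrank K (W.comap U.subtype) = c := by
    rw [← finrank_map_subtype_eq, map_comap_subtype, hUW]
  rw [Nat.card_congr e, Nat.card_prod, natCard_subtype_forall_mem, natCard_subtype_forall_mem,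
    Nat.card_congr (Equiv.subtypeEquivRight fun v =>
      (W.comap U.subtype).subtype.linearIndependent_iff (ker_subtype _)),
    natCard_linearIndependent, hcomap]
  exact congrArg _ ((π.natCard_linearIndependent_comp t).trans (by rw [hker, hrange]))

end AdaptedPair

variable [Fintype K]

local notation "q" => Fintype.card K

theorem natCard_submodule_finrank_inf_mul [Finite V] :
    Nat.card {W : Submodule K V // finrank K W = c + t ∧ finrank K ↥(U ⊓ W) = c} *
      ((∏ l ∈ range c, (q ^ c - q ^ l)) * (q ^ (c * t) * ∏ l ∈ range t, (q ^ t - q ^ l))) =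
    (∏ l ∈ range c, (q ^ finrank K U - q ^ l)) *
      (q ^ (finrank K U * t) * ∏ l ∈ range t, (q ^ finrank K (V ⧸ U) - q ^ l)) := by
  rw [← AdaptedPair.natCard_eq, mul_comm, ← Nat.card_subtype_comp_of_card_fiber_eq
    AdaptedPair.span _ fun W hW => AdaptedPair.natCard_span_eq U c t hW.1 hW.2]
  exact Nat.card_congr (Equiv.subtypeUnivEquiv fun p => ⟨p.finrank_span, p.finrank_inf_span⟩)

theorem natCard_submodule_finrank_inf [Finite V] :
    (Nat.card {W : Submodule K V // finrank K W = c + t ∧ finrank K ↥(U ⊓ W) = c} : ℚ) =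
      (q : ℚ) ^ ((finrank K U - c) * t) * gaussBinom q (finrank K U) c *
        gaussBinom q (finrank K (V ⧸ U)) t := by
  rcases lt_or_ge (finrank K U) c with hlt | hle
  · rw [gaussBinom_eq_zero_of_lt hlt, mul_zero, zero_mul, Nat.cast_eq_zero, Nat.card_eq_zero]
    left
    exact ⟨fun W => hlt.not_ge (W.2.2 ▸ finrank_mono inf_le_left)⟩
  obtain ⟨s, hs⟩ := Nat.exists_eq_add_of_le hle
  have hq := Fintype.one_lt_card (α := K)
  have key := congrArg (Nat.cast : ℕ → ℚ) (natCard_submodule_finrank_inf_mul U c t)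
  simp only [Nat.cast_mul, Nat.cast_pow, Nat.cast_prod_range_pow_sub_pow hq.le] at key
  rw [← gaussBinom_mul_prod_range_pow_sub_pow hq (finrank K U),
    ← gaussBinom_mul_prod_range_pow_sub_pow hq (finrank K (V ⧸ U))] at key
  refine mul_right_cancel₀ (mul_ne_zero (prod_range_pow_sub_pow_ne_zero hq c)
    (mul_ne_zero (by positivity) (prod_range_pow_sub_pow_ne_zero hq t))) (key.trans ?_)
  rw [hs, Nat.add_sub_cancel_left]
  ring

end SubmoduleCount

theorem card_matrices_with_col_intersection_general {K : Type*} [Field K] [Fintype K]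
    {q n i j c : ℕ} (hq : Fintype.card K = q) (hc : c ≤ j)
    (X : Matrix (Fin n) (Fin n) K) (hX : X.rank = i) :
    (Nat.card {Y : Matrix (Fin n) (Fin n) K // Y.rank = j ∧
        Module.finrank K
          ↥(LinearMap.range X.mulVecLin ⊓ LinearMap.range Y.mulVecLin) = c} : ℚ) =
      (q : ℚ) ^ ((i - c) * (j - c)) * gaussBinom q i c * gaussBinom q (n - i) (j - c) *
        ∏ l ∈ Finset.range j, ((q : ℚ) ^ n - q ^ l) := by
  subst hq
  obtain ⟨t, rfl⟩ := Nat.exists_eq_add_of_le hc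
  set U := LinearMap.range X.mulVecLin
  have hU : finrank K U = i := hX
  have hquot : finrank K ((Fin n → K) ⧸ U) = n - i := by
    rw [finrank_quotient, finrank_fin_fun, hU]
  have hfiber (W : Submodule K (Fin n → K)) (hW : finrank K W = c + t ∧ finrank K ↥(U ⊓ W) = c) :
      Nat.card {Y : Matrix (Fin n) (Fin n) K // LinearMap.range Y.mulVecLin = W} =
        ∏ l ∈ range (c + t), (Fintype.card K ^ n - Fintype.card K ^ l) := by
    rw [natCard_range_mulVecLin_eq, hW.1, Fintype.card_fin]
  simp only [Matrix.rank]
  rw [Nat.card_subtype_comp_of_card_fiber_eq _ _ hfiber, Nat.cast_mul,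
    Nat.cast_prod_range_pow_sub_pow Fintype.card_pos, natCard_submodule_finrank_inf, hU, hquot,
    Nat.add_sub_cancel_left]
  ring

/-- Fix an `n × n` matrix `X` over `F_q` of rank `i`, and let `c ≤ j ≤ n`. The number
of `n × n` matrices `Y` with `rank Y = j` and `dim (col X ⊓ col Y) = c` equals
`q^{(i-c)(j-c)} (i choose c)_q (n-i choose j-c)_q ∏_{l=0}^{j-1} (q^n - q^l)`. -/
theorem card_matrices_with_col_intersection {K : Type*} [Field K] [Fintype K]
    {q n i j c : ℕ} (hq : Fintype.card K = q) (hc : c ≤ j) (hj : j ≤ n)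
    (X : Matrix (Fin n) (Fin n) K) (hX : X.rank = i) :
    (Nat.card {Y : Matrix (Fin n) (Fin n) K // Y.rank = j ∧
        Module.finrank K
          ↥(LinearMap.range X.mulVecLin ⊓ LinearMap.range Y.mulVecLin) = c} : ℚ) =
      (q : ℚ) ^ ((i - c) * (j - c)) * gaussBinom q i c * gaussBinom q (n - i) (j - c) *
        ∏ l ∈ Finset.range j, ((q : ℚ) ^ n - q ^ l) :=
  card_matrices_with_col_intersection_general hq hc X hX
end

section
/- Let D_H denote the number of nonzero vectors in F_{q^m}^t of Hamming weight at most k, and let D denote the number of nonzero elements of sum-rank weight at most k in the space F_q^{n x m} where n = (n_1,...,n_{t*},1,...,1) and m = (m_1,...,m_{t*},m',...,m') with t - t* trailing components of size 1 x m'. Then D_H' <= D <= q^{sum_{i=1}^{t*} n_i m_i} * D_H', where D_H' is the number of elements of F_{q^{m'}}^{t-t*} of Hamming weight at most k. -/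
/-!
The trailing `t - t*` components are `1 × m'` matrices, and writing an element of `E` in
coordinates turns `E^{t-t*}` into exactly these components, a matrix row having rank `1` iff
it is nonzero; so the Hamming ball of `E^{t-t*}` is in bijection with the sum-rank ball of the
tail. For the upper bound, an element of the sum-rank ball is determined by its head (one of
`q^{∑ nᵢmᵢ}` choices) and its tail (in the tail ball). For the lower bound, extend a tail by the
zero head, except that the zero tail goes to a fixed rank-one head, which keeps the map
injective with nonzero values.
-/

open Matrix Module

namespace Matrix

variable {K m n : Type*} [Field K] [Fintype n]

theorem rank_eq_zero_iff {A : Matrix m n K} : A.rank = 0 ↔ A = 0 := by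
  classical
  rw [rank, Submodule.finrank_eq_zero, LinearMap.range_eq_bot, ← toLin'_apply',
    LinearEquiv.map_eq_zero_iff]

theorem rank_eq_one_of_card_eq_one [Fintype m] (hm : Fintype.card m = 1) {A : Matrix m n K}
    (hA : A ≠ 0) : A.rank = 1 :=
  le_antisymm (hm ▸ rank_le_card_height A)
    (Nat.one_le_iff_ne_zero.mpr (rank_eq_zero_iff.not.mpr hA))

theorem rank_single_one [DecidableEq m] [DecidableEq n] (i : m) (j : n) :
    (single i j (1 : K)).rank = 1 := by
  refine le_antisymm (single_eq_single_vecMulVec_single (α := K) i j ▸ rank_vecMulVec_le _ _) ?_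
  refine Nat.one_le_iff_ne_zero.mpr (rank_eq_zero_iff.not.mpr fun h => ?_)
  simpa using congr($h i j)

end Matrix

section SumRank

variable {K : Type*} [Field K] {ι : Type*} [Fintype ι] {n m : ι → ℕ}

noncomputable def sumRank (X : ∀ i, Matrix (Fin (n i)) (Fin (m i)) K) : ℕ := ∑ i, (X i).rank

@[simp]
theorem sumRank_zero : sumRank (0 : ∀ i, Matrix (Fin (n i)) (Fin (m i)) K) = 0 := by
  simp [sumRank]

theorem sumRank_pi_single [DecidableEq ι] (i : ι) (A : Matrix (Fin (n i)) (Fin (m i)) K) :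
    sumRank (Pi.single (M := fun i => Matrix (Fin (n i)) (Fin (m i)) K) i A) = A.rank := by
  rw [sumRank, Fintype.sum_eq_single i fun j hj => by rw [Pi.single_eq_of_ne hj, rank_zero],
    Pi.single_eq_same]

theorem sumRank_eq_add (p : ι → Prop) [DecidablePred p]
    (X : ∀ i, Matrix (Fin (n i)) (Fin (m i)) K) :
    sumRank X = sumRank (fun i : {i // p i} => X i) + sumRank (fun i : {i // ¬ p i} => X i) :=
  (Fintype.sum_subtype_add_sum_subtype p _).symm

end SumRank

theorem card_pi_matrix {K ι : Type*} [Fintype K] [Fintype ι] (n m : ι → ℕ) :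
    Nat.card (∀ i, Matrix (Fin (n i)) (Fin (m i)) K) = Fintype.card K ^ ∑ i, n i * m i := by
  simp [Matrix, Nat.card_pi, ← pow_mul, Finset.prod_pow_eq_pow_sum, mul_comm]

namespace Module.Basis

variable {K E : Type*} [Field K] [AddCommGroup E] [Module K E] {m' : ℕ}

noncomputable def rowEquiv (b : Basis (Fin m') K E) {n m : ℕ} (hn : n = 1) (hm : m = m') :
    E ≃ₗ[K] Matrix (Fin n) (Fin m) K :=
  b.equivFun ≪≫ₗ (LinearEquiv.funUnique (Fin 1) K (Fin m' → K)).symm ≪≫ₗ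
    reindexLinearEquiv K K (finCongr hn.symm) (finCongr hm.symm)

theorem rank_rowEquiv [DecidableEq E] (b : Basis (Fin m') K E) {n m : ℕ} (hn : n = 1)
    (hm : m = m') (y : E) : (b.rowEquiv hn hm y).rank = if y = 0 then 0 else 1 := by
  split_ifs with hy
  · rw [hy, map_zero, rank_zero]
  · exact rank_eq_one_of_card_eq_one (by simp [hn]) ((b.rowEquiv hn hm).map_ne_zero_iff.mpr hy)

variable {ι κ : Type*} [Fintype ι] [Fintype κ] {n m : κ → ℕ}

noncomputable def rowsEquiv (b : Basis (Fin m') K E) (σ : ι ≃ κ) (hn : ∀ i, n i = 1)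
    (hm : ∀ i, m i = m') : (ι → E) ≃ ∀ i, Matrix (Fin (n i)) (Fin (m i)) K :=
  σ.piCongr fun j => (b.rowEquiv (hn (σ j)) (hm (σ j))).toEquiv

theorem sumRank_rowsEquiv [DecidableEq E] (b : Basis (Fin m') K E) (σ : ι ≃ κ)
    (hn : ∀ i, n i = 1) (hm : ∀ i, m i = m') (x : ι → E) :
    sumRank (b.rowsEquiv σ hn hm x) = hammingNorm x := by
  rw [sumRank, ← σ.sum_comp, hammingNorm, Finset.card_filter]
  refine Finset.sum_congr rfl fun j _ => ?_
  rw [rowsEquiv, Equiv.piCongr_apply_apply, LinearEquiv.coe_toEquiv, rank_rowEquiv, ite_not]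

end Module.Basis

section HeadTail

variable {K : Type*} [Field K] {ι : Type*} [Fintype ι] {n m : ι → ℕ}
  (p : ι → Prop) [DecidablePred p]

theorem sumRank_piEquivPiSubtypeProd_symm
    (P : (∀ i : {i // p i}, Matrix (Fin (n i)) (Fin (m i)) K) ×
      (∀ i : {i // ¬ p i}, Matrix (Fin (n i)) (Fin (m i)) K)) :
    sumRank ((Equiv.piEquivPiSubtypeProd p (fun i => Matrix (Fin (n i)) (Fin (m i)) K)).symm P) =
      sumRank P.1 + sumRank P.2 := by
  let e := Equiv.piEquivPiSubtypeProd p (fun i => Matrix (Fin (n i)) (Fin (m i)) K)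
  calc sumRank (e.symm P) = sumRank (e (e.symm P)).1 + sumRank (e (e.symm P)).2 :=
        sumRank_eq_add p _
    _ = sumRank P.1 + sumRank P.2 := by rw [e.apply_symm_apply]

variable [Finite K] {k : ℕ}

theorem card_sumRankBall_le_card_mul :
    Nat.card {X : ∀ i, Matrix (Fin (n i)) (Fin (m i)) K // X ≠ 0 ∧ sumRank X ≤ k} ≤
      Nat.card (∀ i : {i // p i}, Matrix (Fin (n i)) (Fin (m i)) K) *
        Nat.card {Z : ∀ i : {i // ¬ p i}, Matrix (Fin (n i)) (Fin (m i)) K // sumRank Z ≤ k} := by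
  rw [← Nat.card_prod]
  refine Nat.card_le_card_of_injective (fun X => (fun i => X.1 i,
    ⟨fun i => X.1 i, (le_add_self.trans_eq (sumRank_eq_add p X.1).symm).trans X.2.2⟩)) ?_
  intro X X' h
  simp only [Prod.ext_iff, Subtype.ext_iff] at h
  exact Subtype.ext ((Equiv.piEquivPiSubtypeProd p _).injective (Prod.ext h.1 h.2))

theorem card_sumRankBall_compl_le (Y : ∀ i : {i // p i}, Matrix (Fin (n i)) (Fin (m i)) K)
    (hY : Y ≠ 0) (hYk : sumRank Y ≤ k) :
    Nat.card {Z : ∀ i : {i // ¬ p i}, Matrix (Fin (n i)) (Fin (m i)) K // sumRank Z ≤ k} ≤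
      Nat.card {X : ∀ i, Matrix (Fin (n i)) (Fin (m i)) K // X ≠ 0 ∧ sumRank X ≤ k} := by
  classical
  let g (Z : {Z : ∀ i : {i // ¬ p i}, Matrix (Fin (n i)) (Fin (m i)) K // sumRank Z ≤ k}) :=
    if Z.1 = 0 then (Y, 0) else (0, Z.1)
  have hg : Function.Injective g := by
    intro Z Z' h
    simp only [g] at h
    split_ifs at h <;> simp_all [Prod.ext_iff, Subtype.ext_iff]
  have hg0 (Z) : g Z ≠ 0 := by
    simp only [g]
    split_ifs with hZ <;> simp [Prod.ext_iff, hY, hZ]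
  have hgk (Z) : sumRank (g Z).1 + sumRank (g Z).2 ≤ k := by
    simp only [g]
    split_ifs <;> simp [hYk, Z.2]
  let e := Equiv.piEquivPiSubtypeProd p (fun i => Matrix (Fin (n i)) (Fin (m i)) K)
  refine Nat.card_le_card_of_injective (fun Z => ⟨e.symm (g Z),
    fun h => hg0 Z (e.symm_apply_eq.mp h),
    (sumRank_piEquivPiSubtypeProd_symm p _).trans_le (hgk Z)⟩) ?_
  intro Z Z' h
  exact hg (e.symm.injective (congrArg Subtype.val h))

end HeadTail

def finSubEquivSubtypeNotLt (t s : ℕ) : Fin (t - s) ≃ {i : Fin t // ¬ (i : ℕ) < s} where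
  toFun j := ⟨⟨s + j, by omega⟩, by simp⟩
  invFun i := ⟨i.1 - s, by omega⟩
  left_inv j := by ext; simp
  right_inv i := by ext; simp; omega

theorem ball_size_bounds_via_hamming_general {K E : Type*} [Field K] [Fintype K] [Field E]
    [Algebra K E] [DecidableEq E] {q t tstar m' k : ℕ}
    (hq : Fintype.card K = q) (b : Module.Basis (Fin m') K E)
    (nn mm : Fin t → ℕ) (hts : 1 ≤ tstar) (htt : tstar ≤ t)
    (hn : ∀ i, 1 ≤ nn i) (hmn : ∀ i, nn i ≤ mm i)
    (htail : ∀ i : Fin t, tstar ≤ (i : ℕ) → nn i = 1 ∧ mm i = m')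
    (hk : 1 ≤ k) :
    let D : ℕ := Nat.card {X : (i : Fin t) → Matrix (Fin (nn i)) (Fin (mm i)) K //
      X ≠ 0 ∧ ∑ i, (X i).rank ≤ k}
    let DH' : ℕ := Nat.card {x : Fin (t - tstar) → E // hammingNorm x ≤ k}
    DH' ≤ D ∧
      D ≤ q ^ (∑ i ∈ Finset.univ.filter (fun i : Fin t => (i : ℕ) < tstar),
        nn i * mm i) * DH' := by
  intro D DH'
  let p (i : Fin t) : Prop := (i : ℕ) < tstar
  let i₀ : {i // p i} := ⟨⟨0, by omega⟩, hts⟩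
  let Y := Pi.single (M := fun i : {i // p i} => Matrix (Fin (nn i)) (Fin (mm i)) K) i₀
    (single ⟨0, hn i₀⟩ ⟨0, (hn i₀).trans (hmn i₀)⟩ 1)
  have hY : sumRank Y = 1 := by rw [sumRank_pi_single, rank_single_one]
  let e := b.rowsEquiv (finSubEquivSubtypeNotLt t tstar)
    (fun i => (htail i.1 (not_lt.mp i.2)).1) (fun i => (htail i.1 (not_lt.mp i.2)).2)
  have hDH' : DH' = Nat.card {Z // sumRank Z ≤ k} :=
    Nat.card_congr (e.subtypeEquiv fun x => by rw [b.sumRank_rowsEquiv])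
  have hhead : Nat.card (∀ i : {i // p i}, Matrix (Fin (nn i)) (Fin (mm i)) K) =
      q ^ ∑ i ∈ Finset.univ.filter p, nn i * mm i := by
    rw [card_pi_matrix, hq, Finset.sum_subtype _ (fun _ => Finset.mem_filter_univ _)]
  rw [hDH', ← hhead]
  exact ⟨card_sumRankBall_compl_le p Y (fun h => by simp [h] at hY) (hY ▸ hk),
    card_sumRankBall_le_card_mul p⟩

/-- Let `D` be the number of nonzero elements of sum-rank weight at most `k` in the
space `F_q^{n×m}` where `n = (n_1,…,n_{t*},1,…,1)` and `m = (m_1,…,m_{t*},m',…,m')`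
(with `t - t*` trailing `1 × m'` components), and let `D_H'` be the number of elements
of `F_{q^{m'}}^{t-t*}` of Hamming weight at most `k`. Then
`D_H' ≤ D ≤ q^{∑_{i=1}^{t*} n_i m_i} · D_H'`. Here `E` plays the role of
`F_{q^{m'}}`, an extension of `K = F_q` with a basis indexed by `Fin m'`. -/
theorem ball_size_bounds_via_hamming {K E : Type*} [Field K] [Fintype K] [Field E]
    [Algebra K E] [Fintype E] [DecidableEq E] {q t tstar m' k : ℕ}
    (hq : Fintype.card K = q) (b : Module.Basis (Fin m') K E)
    (nn mm : Fin t → ℕ) (hts : 1 ≤ tstar) (htt : tstar ≤ t)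
    (hn : ∀ i, 1 ≤ nn i) (hmn : ∀ i, nn i ≤ mm i)
    (htail : ∀ i : Fin t, tstar ≤ (i : ℕ) → nn i = 1 ∧ mm i = m')
    (hk : 1 ≤ k) :
    let D : ℕ := Nat.card {X : (i : Fin t) → Matrix (Fin (nn i)) (Fin (mm i)) K //
      X ≠ 0 ∧ ∑ i, (X i).rank ≤ k}
    let DH' : ℕ := Nat.card {x : Fin (t - tstar) → E // hammingNorm x ≤ k}
    DH' ≤ D ∧
      D ≤ q ^ (∑ i ∈ Finset.univ.filter (fun i : Fin t => (i : ℕ) < tstar),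
        nn i * mm i) * DH' :=
  ball_size_bounds_via_hamming_general hq b nn mm hts htt hn hmn htail hk
end
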